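/- The maps r(z)·(x,y) = R_z((x,y)−(0,c)) + (0,c) with c = (1+x²+y²)/(2y) define a group action of the circle ℝ/2πℤ on the upper half-plane: r(0) is the identity and r(z₁)∘r(z₂) = r(z₁+z₂). -/
import Mathlib


noncomputable def rAct (z : ℝ) (p : ℝ × ℝ) : ℝ × ℝ :=
  let c := (1 + p.1^2 + p.2^2)/(2*p.2)
  (Real.cos z * p.1 - Real.sin z * (p.2 - c),
   Real.sin z * p.1 + Real.cos z * (p.2 - c) + c)

theorem stmt12 (p : ℝ × ℝ) (hp : 0 < p.2) :
    rAct 0 p = p ∧ ∀ z₁ z₂ : ℝ, rAct z₁ (rAct z₂ p) = rAct (z₁ + z₂) p := by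
  constructor
  · simp [rAct]
  · intro z₁ z₂
    have hyne : p.2 ≠ 0 := ne_of_gt hp
    set c := (1 + p.1^2 + p.2^2)/(2*p.2) with hc
    have h2yc : 1 + p.1^2 + p.2^2 = 2*p.2*c := by
      rw [hc]; field_simp
    set x' := Real.cos z₂ * p.1 - Real.sin z₂ * (p.2 - c) with hx'
    set y' := Real.sin z₂ * p.1 + Real.cos z₂ * (p.2 - c) + c with hy'
    have hpyth := Real.sin_sq_add_cos_sq z₂
    have key : 1 + x'^2 + y'^2 = 2*y'*c := by
      rw [hx', hy']
      linear_combination (p.1^2 + (p.2 - c)^2) * hpyth + h2yc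
    have hy'ne : y' ≠ 0 := by
      intro h
      rw [h] at key
      nlinarith [sq_nonneg x']
    have hc' : (1 + x'^2 + y'^2)/(2*y') = c := by
      rw [key]; field_simp
    show rAct z₁ (x', y') = rAct (z₁ + z₂) p
    simp only [rAct, Real.cos_add, Real.sin_add]
    rw [hc', ← hc]
    refine Prod.ext ?_ ?_ <;> simp only [hx', hy'] <;> ring
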